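/- arXiv:2404.08775 — 8 statements merged into one kernel-verified Lean document; each statement's English description precedes it below -/
import Mathlib

section
/- For every commutative ring k and every k-valued measure μ on the class of permutations, μ vanishes on the embedding of the subpermutation on {1,3,4} into the permutation 1342 (the four-element permutation with orders 1<2<3<4 and 1≺3≺4≺2); that is, μ of this inclusion equals 0. -/
/-- A permutation: a finite set equipped with two linear orders. -/
structure Perm2 : Type 1 where
  A : Type
  fin : Fintype A
  ord1 : LinearOrder A
  ord2 : LinearOrder A

attribute [instance] Perm2.fin

/-- The first order. -/
def Perm2.lt1 (X : Perm2) (a b : X.A) : Prop := X.ord1.lt a b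
/-- The second order. -/
def Perm2.lt2 (X : Perm2) (a b : X.A) : Prop := X.ord2.lt a b

/-- An embedding of permutations: an injective map preserving both orders. -/
structure Emb (X Y : Perm2) where
  f : X.A → Y.A
  inj : Function.Injective f
  mono1 : ∀ a b : X.A, X.lt1 a b → Y.lt1 (f a) (f b)
  mono2 : ∀ a b : X.A, X.lt2 a b → Y.lt2 (f a) (f b)

/-- Composition of embeddings. -/
def Emb.comp {X Y Z : Perm2} (j : Emb Y Z) (i : Emb X Y) : Emb X Z where
  f := j.f ∘ i.f
  inj := j.inj.comp i.inj
  mono1 := fun a b h => j.mono1 _ _ (i.mono1 a b h)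
  mono2 := fun a b h => j.mono2 _ _ (i.mono2 a b h)

/-- An amalgamation of the embeddings `i : Y → X` and `j : Y → Y'`. -/
structure Amalg {Y X Y' : Perm2} (i : Emb Y X) (j : Emb Y Y') : Type 1 where
  Z : Perm2
  i' : Emb Y' Z
  j' : Emb X Z
  comm : ∀ a : Y.A, i'.f (j.f a) = j'.f (i.f a)
  cover : ∀ z : Z.A, (∃ a, i'.f a = z) ∨ (∃ b, j'.f b = z)

/-- Isomorphism of amalgamations. -/
def AmalgIso {Y X Y' : Perm2} {i : Emb Y X} {j : Emb Y Y'} (A B : Amalg i j) : Prop :=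
  ∃ e : Emb A.Z B.Z, Function.Surjective e.f ∧
    (∀ a, e.f (A.i'.f a) = B.i'.f a) ∧ (∀ b, e.f (A.j'.f b) = B.j'.f b)

/-- A measure on the class of permutations valued in a commutative ring `k`. -/
structure PMeasure (k : Type) [CommRing k] : Type 1 where
  μ : ∀ {X Y : Perm2}, Emb X Y → k
  iso_invariant : ∀ {X Y X' Y' : Perm2} (i : Emb X Y) (i' : Emb X' Y')
    (u : Emb X X') (v : Emb Y Y'), Function.Surjective u.f → Function.Surjective v.f →
    (∀ a, v.f (i.f a) = i'.f (u.f a)) → μ i = μ i'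
  iso_one : ∀ {X Y : Perm2} (i : Emb X Y), Function.Surjective i.f → μ i = 1
  comp_mul : ∀ {X Y Z : Perm2} (i : Emb X Y) (j : Emb Y Z), μ (j.comp i) = μ j * μ i
  amalg_sum : ∀ {Y X Y' : Perm2} (i : Emb Y X) (j : Emb Y Y') (n : ℕ)
    (r : Fin n → Amalg i j), (∀ A : Amalg i j, ∃! α : Fin n, AmalgIso (r α) A) →
    μ i = ∑ α : Fin n, μ (r α).i'

/-- The permutation denoted by a sequence of distinct natural numbers: the underlying
set consists of the listed numbers, the first order is the numerical one, and the second
order is the order of appearance in the sequence. -/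
def listPerm (l : List ℕ) : Perm2 where
  A := {n : ℕ // n ∈ l.toFinset}
  fin := by infer_instance
  ord1 := LinearOrder.lift' (fun x => x.val) Subtype.val_injective
  ord2 := LinearOrder.lift' (fun x => l.idxOf x.val)
    (fun a b h => Subtype.ext ((List.idxOf_inj (List.mem_toFinset.mp a.2)).mp h))

/-- The subpermutation of `X` on a subset `S`, with the induced orders. -/
noncomputable def subPerm (X : Perm2) (S : Set X.A) : Perm2 where
  A := S
  fin := S.toFinite.fintype
  ord1 := @LinearOrder.lift' _ _ X.ord1 (fun x => x.val) Subtype.val_injective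
  ord2 := @LinearOrder.lift' _ _ X.ord2 (fun x => x.val) Subtype.val_injective

/-- The inclusion of a subpermutation. -/
noncomputable def subEmb (X : Perm2) (S : Set X.A) : Emb (subPerm X S) X where
  f := Subtype.val
  inj := Subtype.val_injective
  mono1 := fun _ _ h => h
  mono2 := fun _ _ h => h

/-!
Amalgamate `ι : 134 ↪ 1342` with the three embeddings `j₁, j₂, j₃` of `123` into `1234` whose new
point lies at the bottom, between the first two points, or between the last two. An amalgamation
of two one-point extensions is determined up to isomorphism by how the two new points compare in
each order. For `j₁` and `j₃` both comparisons are forced by transitivity through an old point;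
for `j₂` only the second one is. The extensions of `1234` that arise are only
`ιa : 1234 ↪ 13452` and `ιb : 1234 ↪ 12453`, so the amalgamation axiom gives `μ ι = μ ιb`,
`μ ι = μ ιa` and `μ ι = μ ιa + μ ιb`, whence `μ ι = 2 μ ι = 0`.
-/

namespace Perm2

abbrev order (X : Perm2) : Fin 2 → LinearOrder X.A := ![X.ord1, X.ord2]

def cmp (X : Perm2) (n : Fin 2) (a b : X.A) : Ordering :=
  letI := X.order n; _root_.cmp a b

variable (X : Perm2) (n : Fin 2) {a b c : X.A}

theorem cmp_eq_eq_iff : X.cmp n a b = .eq ↔ a = b :=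
  letI := X.order n; _root_.cmp_eq_eq_iff a b

theorem cmp_swap (a b : X.A) : (X.cmp n a b).swap = X.cmp n b a :=
  letI := X.order n; _root_.cmp_swap a b

theorem cmp_trans {o : Ordering} (ho : o ≠ .eq) (hab : X.cmp n a b = o) (hbc : X.cmp n b c = o) :
    X.cmp n a c = o := by
  let _ := X.order n
  unfold cmp at *
  cases o
  · rw [cmp_eq_lt_iff] at *
    exact hab.trans hbc
  · exact absurd rfl ho
  · rw [cmp_eq_gt_iff] at *
    exact hbc.trans hab

theorem cmp_zero_eq_lt_iff : X.cmp 0 a b = .lt ↔ X.lt1 a b :=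
  letI := X.ord1; _root_.cmp_eq_lt_iff a b

theorem cmp_one_eq_lt_iff : X.cmp 1 a b = .lt ↔ X.lt2 a b :=
  letI := X.ord2; _root_.cmp_eq_lt_iff a b

end Perm2

namespace Emb

variable {X Y : Perm2}

theorem cmp_map (e : Emb X Y) (n : Fin 2) (a b : X.A) : Y.cmp n (e.f a) (e.f b) = X.cmp n a b := by
  have hmono : letI := X.order n; letI := Y.order n; StrictMono e.f := by
    fin_cases n
    exacts [e.mono1, e.mono2]
  let _ := X.order n
  let _ := Y.order n
  exact (hmono.compares.2 (cmp_compares a b)).cmp_eq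

def ofCmp (f : X.A → Y.A) (hf : ∀ n a b, Y.cmp n (f a) (f b) = X.cmp n a b) : Emb X Y where
  f := f
  inj a b hab := (X.cmp_eq_eq_iff 0).1 (by rw [← hf, hab, Y.cmp_eq_eq_iff])
  mono1 a b h := (Y.cmp_zero_eq_lt_iff).1 (by rw [hf]; exact (X.cmp_zero_eq_lt_iff).2 h)
  mono2 a b h := (Y.cmp_one_eq_lt_iff).1 (by rw [hf]; exact (X.cmp_one_eq_lt_iff).2 h)

protected def id (X : Perm2) : Emb X X := ofCmp _root_.id fun _ _ _ => rfl

end Emb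

instance (l : List ℕ) : DecidableEq (listPerm l).A :=
  inferInstanceAs (DecidableEq {n // n ∈ l.toFinset})

/-- The embedding sending the `k`-th entry of `l` to the `k`-th entry of `l'`. -/
def listPermEmb (l m l' : List ℕ) (hm : ∀ a : (listPerm l).A, l'.getD (l.idxOf a.1) 0 ∈ m.toFinset)
    (hcmp : ∀ n a b, (listPerm m).cmp n ⟨_, hm a⟩ ⟨_, hm b⟩ = (listPerm l).cmp n a b) :
    Emb (listPerm l) (listPerm m) :=
  Emb.ofCmp _ hcmp

namespace Amalg

variable {Y X Y' : Perm2} {i : Emb Y X} {j : Emb Y Y'}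

def cmp (A : Amalg i j) (n : Fin 2) (a : Y'.A) (b : X.A) : Ordering :=
  A.Z.cmp n (A.i'.f a) (A.j'.f b)

variable (A : Amalg i j) (n : Fin 2)

theorem cmp_eq_eq_iff {a : Y'.A} {b : X.A} : A.cmp n a b = .eq ↔ A.i'.f a = A.j'.f b :=
  A.Z.cmp_eq_eq_iff n

theorem cmp_map_left (y : Y.A) (b : X.A) : A.cmp n (j.f y) b = X.cmp n (i.f y) b := by
  rw [cmp, A.comm, Emb.cmp_map]

theorem cmp_map_right (a : Y'.A) (y : Y.A) : A.cmp n a (i.f y) = Y'.cmp n a (j.f y) := by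
  rw [cmp, ← A.comm, Emb.cmp_map]

theorem cmp_trans {a : Y'.A} {b : X.A} (y : Y.A) {o : Ordering} (ho : o ≠ .eq)
    (ha : Y'.cmp n a (j.f y) = o) (hb : X.cmp n (i.f y) b = o) : A.cmp n a b = o :=
  A.Z.cmp_trans n ho (b := A.i'.f (j.f y)) (by rwa [Emb.cmp_map]) (by rwa [A.comm, Emb.cmp_map])

theorem cmp_eq_of_cmp_new_eq (B : Amalg i j) {q : Y'.A} {p : X.A}
    (hq : ∀ a, (∀ y, j.f y ≠ a) → a = q) (hp : ∀ b, (∀ y, i.f y ≠ b) → b = p)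
    (h : ∀ n, A.cmp n q p = B.cmp n q p) : A.cmp = B.cmp := by
  funext n a b
  by_cases ha : ∃ y, j.f y = a
  · obtain ⟨y, rfl⟩ := ha
    rw [cmp_map_left, cmp_map_left]
  by_cases hb : ∃ y, i.f y = b
  · obtain ⟨y, rfl⟩ := hb
    rw [cmp_map_right, cmp_map_right]
  simp only [not_exists] at ha hb
  rw [hq a ha, hp b hb, h]

open Classical in
noncomputable def desc {W : Type*} (f : Y'.A → W) (g : X.A → W) (z : A.Z.A) : W :=
  if h : ∃ a, A.i'.f a = z then f h.choose else g ((A.cover z).resolve_left h).choose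

variable {A} {W : Type*} {f : Y'.A → W} {g : X.A → W}

theorem desc_i' (a : Y'.A) : A.desc f g (A.i'.f a) = f a := by
  have h : ∃ a', A.i'.f a' = A.i'.f a := ⟨a, rfl⟩
  rw [desc, dif_pos h, A.i'.inj h.choose_spec]

theorem desc_j' (hfg : ∀ a b, A.i'.f a = A.j'.f b → f a = g b) (b : X.A) :
    A.desc f g (A.j'.f b) = g b := by
  by_cases h : ∃ a, A.i'.f a = A.j'.f b
  · rw [desc, dif_pos h, hfg _ _ h.choose_spec]
  · have hb := ((A.cover (A.j'.f b)).resolve_left h).choose_spec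
    rw [desc, dif_neg h, A.j'.inj hb]

end Amalg

section AmalgIso

variable {Y X Y' : Perm2} {i : Emb Y X} {j : Emb Y Y'}

/-- The isomorphism `A.Z → B.Z` is glued from `B.i'` and `B.j'` along the covering of `A.Z`. -/
theorem amalgIso_iff_cmp_eq {A B : Amalg i j} : AmalgIso A B ↔ A.cmp = B.cmp := by
  constructor
  · rintro ⟨e, -, hi, hj⟩
    funext n a b
    rw [Amalg.cmp, Amalg.cmp, ← hi, ← hj, Emb.cmp_map]
  · intro h
    have hfg : ∀ a b, A.i'.f a = A.j'.f b → B.i'.f a = B.j'.f b := fun a b hab =>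
      (B.cmp_eq_eq_iff 0).1 (by rw [← h, A.cmp_eq_eq_iff, hab])
    have hi : ∀ a, A.desc B.i'.f B.j'.f (A.i'.f a) = B.i'.f a := Amalg.desc_i'
    have hj : ∀ b, A.desc B.i'.f B.j'.f (A.j'.f b) = B.j'.f b := Amalg.desc_j' hfg
    have hcmp : ∀ n z w, B.Z.cmp n (A.desc B.i'.f B.j'.f z) (A.desc B.i'.f B.j'.f w) =
        A.Z.cmp n z w := by
      intro n z w
      rcases A.cover z with ⟨a, rfl⟩ | ⟨b, rfl⟩ <;> rcases A.cover w with ⟨a', rfl⟩ | ⟨b', rfl⟩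
      · rw [hi, hi, Emb.cmp_map, Emb.cmp_map]
      · rw [hi, hj]
        exact (congrFun (congrFun (congrFun h n) a) b').symm
      · rw [hj, hi, ← B.Z.cmp_swap n (B.i'.f a'), ← A.Z.cmp_swap n (A.i'.f a')]
        exact congrArg Ordering.swap (congrFun (congrFun (congrFun h n) a') b).symm
      · rw [hj, hj, Emb.cmp_map, Emb.cmp_map]
    refine ⟨Emb.ofCmp _ hcmp, fun z => ?_, hi, hj⟩
    rcases B.cover z with ⟨a, rfl⟩ | ⟨b, rfl⟩
    exacts [⟨_, hi a⟩, ⟨_, hj b⟩]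

end AmalgIso

namespace PMeasure

variable {k : Type} [CommRing k] (m : PMeasure k)

theorem μ_subEmb_range {X Y : Perm2} (e : Emb Y X) : m.μ (subEmb X (Set.range e.f)) = m.μ e := by
  let u : Emb Y (subPerm X (Set.range e.f)) :=
    { f := fun a => ⟨e.f a, a, rfl⟩
      inj := fun a b h => e.inj (congrArg Subtype.val h)
      mono1 := e.mono1
      mono2 := e.mono2 }
  refine (m.iso_invariant e _ u (Emb.id X) ?_ Function.surjective_id fun _ => rfl).symm
  rintro ⟨_, a, rfl⟩
  exact ⟨a, rfl⟩

variable {Y X Y' : Perm2} {i : Emb Y X} {j : Emb Y Y'}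

theorem μ_eq_of_cmp_unique (A : Amalg i j) (hA : ∀ C : Amalg i j, A.cmp = C.cmp) :
    m.μ i = m.μ A.i' := by
  simpa using m.amalg_sum i j 1 (fun _ => A) fun C =>
    ⟨0, amalgIso_iff_cmp_eq.2 (hA C), fun α _ => Subsingleton.elim α 0⟩

theorem μ_eq_add_of_cmp_dichotomy (A B : Amalg i j) (hAB : A.cmp ≠ B.cmp)
    (hC : ∀ C : Amalg i j, A.cmp = C.cmp ∨ B.cmp = C.cmp) :
    m.μ i = m.μ A.i' + m.μ B.i' := by
  have hr : ∀ C : Amalg i j, ∃! α : Fin 2, AmalgIso (![A, B] α) C := by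
    intro C
    simp only [amalgIso_iff_cmp_eq]
    rcases hC C with h | h
    · refine ⟨0, h, fun α hα => ?_⟩
      fin_cases α
      · rfl
      · exact absurd (h.trans hα.symm) hAB
    · refine ⟨1, h, fun α hα => ?_⟩
      fin_cases α
      · exact absurd (hα.trans h.symm) hAB
      · rfl
  simpa [Fin.sum_univ_two] using m.amalg_sum i j 2 ![A, B] hr

end PMeasure

namespace Pattern1342

def ι : Emb (listPerm [1,3,4]) (listPerm [1,3,4,2]) :=
  listPermEmb _ _ [1,3,4] (by decide) (by decide)

-- `jₖ` misses the value `k` of `1234`, which is its new point `qₖ`.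
def j₁ : Emb (listPerm [1,3,4]) (listPerm [1,2,3,4]) :=
  listPermEmb _ _ [2,3,4] (by decide) (by decide)

def j₂ : Emb (listPerm [1,3,4]) (listPerm [1,2,3,4]) :=
  listPermEmb _ _ [1,3,4] (by decide) (by decide)

def j₃ : Emb (listPerm [1,3,4]) (listPerm [1,2,3,4]) :=
  listPermEmb _ _ [1,2,4] (by decide) (by decide)

def ιa : Emb (listPerm [1,2,3,4]) (listPerm [1,3,4,5,2]) :=
  listPermEmb _ _ [1,3,4,5] (by decide) (by decide)

def ιb : Emb (listPerm [1,2,3,4]) (listPerm [1,2,4,5,3]) :=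
  listPermEmb _ _ [1,2,4,5] (by decide) (by decide)

def amalg₁ : Amalg ι j₁ where
  Z := listPerm [1,2,4,5,3]
  i' := ιb
  j' := listPermEmb _ _ [2,4,5,3] (by decide) (by decide)
  comm := by decide
  cover := by decide

def amalg₂a : Amalg ι j₂ where
  Z := listPerm [1,3,4,5,2]
  i' := ιa
  j' := listPermEmb _ _ [1,4,5,2] (by decide) (by decide)
  comm := by decide
  cover := by decide

def amalg₂b : Amalg ι j₂ where
  Z := listPerm [1,2,4,5,3]
  i' := ιb
  j' := listPermEmb _ _ [1,4,5,3] (by decide) (by decide)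
  comm := by decide
  cover := by decide

def amalg₃ : Amalg ι j₃ where
  Z := listPerm [1,3,4,5,2]
  i' := ιa
  j' := listPermEmb _ _ [1,3,5,2] (by decide) (by decide)
  comm := by decide
  cover := by decide

abbrev p : (listPerm [1,3,4,2]).A := ⟨2, by decide⟩
abbrev q₁ : (listPerm [1,2,3,4]).A := ⟨1, by decide⟩
abbrev q₂ : (listPerm [1,2,3,4]).A := ⟨2, by decide⟩
abbrev q₃ : (listPerm [1,2,3,4]).A := ⟨3, by decide⟩

theorem cmp_j₁ (C : Amalg ι j₁) (n : Fin 2) : C.cmp n q₁ p = .lt := by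
  fin_cases n <;> exact C.cmp_trans _ ⟨1, by decide⟩ (by decide) (by decide) (by decide)

theorem cmp_j₂_one (C : Amalg ι j₂) : C.cmp 1 q₂ p = .lt :=
  C.cmp_trans _ ⟨3, by decide⟩ (by decide) (by decide) (by decide)

theorem cmp_j₂_zero (C : Amalg ι j₂) : C.cmp 0 q₂ p = .gt ∨ C.cmp 0 q₂ p = .lt := by
  cases h : C.cmp 0 q₂ p
  · exact .inr rfl
  · have h₁ := (C.cmp_eq_eq_iff 1).2 ((C.cmp_eq_eq_iff 0).1 h)
    rw [cmp_j₂_one] at h₁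
    cases h₁
  · exact .inl rfl

theorem cmp_j₃ (C : Amalg ι j₃) (n : Fin 2) : C.cmp n q₃ p = ![.gt, .lt] n := by
  fin_cases n
  · exact C.cmp_trans _ ⟨3, by decide⟩ (by decide) (by decide) (by decide)
  · exact C.cmp_trans _ ⟨4, by decide⟩ (by decide) (by decide) (by decide)

theorem amalg₁_cmp_eq (C : Amalg ι j₁) : amalg₁.cmp = C.cmp :=
  amalg₁.cmp_eq_of_cmp_new_eq C (q := q₁) (p := p) (by decide) (by decide)
    fun n => by rw [cmp_j₁, cmp_j₁]

theorem amalg₃_cmp_eq (C : Amalg ι j₃) : amalg₃.cmp = C.cmp :=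
  amalg₃.cmp_eq_of_cmp_new_eq C (q := q₃) (p := p) (by decide) (by decide)
    fun n => by rw [cmp_j₃, cmp_j₃]

theorem amalg₂a_cmp_ne_amalg₂b_cmp : amalg₂a.cmp ≠ amalg₂b.cmp := fun h =>
  absurd (congrFun (congrFun (congrFun h 0) q₂) p) (by decide)

theorem amalg₂_cmp_eq (C : Amalg ι j₂) : amalg₂a.cmp = C.cmp ∨ amalg₂b.cmp = C.cmp := by
  have hcmp (A : Amalg ι j₂) (h₀ : A.cmp 0 q₂ p = C.cmp 0 q₂ p) : A.cmp = C.cmp := by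
    refine A.cmp_eq_of_cmp_new_eq C (q := q₂) (p := p) (by decide) (by decide) ?_
    exact Fin.forall_fin_two.2 ⟨h₀, by rw [cmp_j₂_one, cmp_j₂_one]⟩
  rcases cmp_j₂_zero C with h | h
  · exact .inl (hcmp _ (by rw [h]; decide))
  · exact .inr (hcmp _ (by rw [h]; decide))

theorem range_ι : Set.range ι.f = {a | a.val ∈ ({1,3,4} : Set ℕ)} := by
  ext a
  revert a
  simp only [Set.mem_range, Set.mem_ofPred_eq, Set.mem_insert_iff, Set.mem_singleton_iff]
  decide

end Pattern1342

open Pattern1342 in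
/-- Every measure vanishes on the inclusion of the subpermutation on {1,3,4} into the
permutation 1342. -/
theorem measure_vanishes_on_1342 (k : Type) [CommRing k] (m : PMeasure k) :
    m.μ (subEmb (listPerm [1,3,4,2]) {a | a.val ∈ ({1,3,4} : Set ℕ)}) = 0 := by
  rw [← range_ι, m.μ_subEmb_range]
  have h₁ : m.μ ι = m.μ ιb := m.μ_eq_of_cmp_unique amalg₁ amalg₁_cmp_eq
  have h₃ : m.μ ι = m.μ ιa := m.μ_eq_of_cmp_unique amalg₃ amalg₃_cmp_eq
  have h₂ : m.μ ι = m.μ ιa + m.μ ιb :=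
    m.μ_eq_add_of_cmp_dichotomy amalg₂a amalg₂b amalg₂a_cmp_ne_amalg₂b_cmp amalg₂_cmp_eq
  rw [← h₁, ← h₃] at h₂
  exact left_eq_add.1 h₂
end

section
/- For every nonzero commutative ring k and every k-valued measure μ on the class of permutations, there exists an embedding i of permutations such that μ(i) is not a unit of k; in other words, there are no regular measures on the class of permutations. -/
/-!
Write permutations as sequences of distinct labels (first order: the labels, second order:
position). Let `i : 13 → 103` add a point below everything, placed in the middle. The permutation
`13` sits inside `123` and inside `134`, and these two extensions are isomorphic. Amalgamating `i`
with `13 → 123` leaves the relative position of `0` and `2` free, giving two amalgams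
`123 → 1023` and `123 → 1203`; amalgamating with `13 → 134` forces the single amalgam
`134 → 1034`, which is isomorphic to `123 → 1023`. The amalgamation axiom therefore gives
`μ(123 → 1203) = 0`, which is not a unit of a nonzero ring.
-/

namespace Perm2

variable (X : Perm2)

instance : DecidableEq X.A := X.ord1.toDecidableEq
instance (a b : X.A) : Decidable (X.lt1 a b) := X.ord1.toDecidableLT a b
instance (a b : X.A) : Decidable (X.lt2 a b) := X.ord2.toDecidableLT a b

variable {X}

lemma lt1_trans {a b c : X.A} (h : X.lt1 a b) (h' : X.lt1 b c) : X.lt1 a c :=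
  @lt_trans X.A X.ord1.toPreorder a b c h h'

lemma lt2_trans {a b c : X.A} (h : X.lt2 a b) (h' : X.lt2 b c) : X.lt2 a c :=
  @lt_trans X.A X.ord2.toPreorder a b c h h'

instance : Trans X.lt1 X.lt1 X.lt1 := ⟨lt1_trans⟩
instance : Trans X.lt2 X.lt2 X.lt2 := ⟨lt2_trans⟩

lemma ne_of_lt1 {a b : X.A} (h : X.lt1 a b) : a ≠ b :=
  @ne_of_lt X.A X.ord1.toPreorder a b h

lemma lt2_irrefl (a : X.A) : ¬X.lt2 a a := @lt_irrefl X.A X.ord2.toPreorder a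

lemma lt2_asymm {a b : X.A} (h : X.lt2 a b) : ¬X.lt2 b a :=
  @lt_asymm X.A X.ord2.toPreorder a b h

lemma lt2_trichotomy (a b : X.A) : X.lt2 a b ∨ a = b ∨ X.lt2 b a :=
  @lt_trichotomy X.A X.ord2 a b

end Perm2

def Emb.ofMono {X Y : Perm2} (f : X.A → Y.A) (mono1 : ∀ a b, X.lt1 a b → Y.lt1 (f a) (f b))
    (mono2 : ∀ a b, X.lt2 a b → Y.lt2 (f a) (f b)) : Emb X Y where
  f := f
  inj := @StrictMono.injective X.A Y.A X.ord1 Y.ord1.toPreorder f mono1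
  mono1 := mono1
  mono2 := mono2

lemma Emb.lt2_iff {X Y : Perm2} (e : Emb X Y) {a b : X.A} :
    Y.lt2 (e.f a) (e.f b) ↔ X.lt2 a b := by
  refine ⟨fun h => ?_, e.mono2 a b⟩
  rcases X.lt2_trichotomy a b with hab | rfl | hba
  · exact hab
  · exact absurd h (Y.lt2_irrefl _)
  · exact absurd h (Y.lt2_asymm (e.mono2 b a hba))

section Amalg

variable {Y X Y' : Perm2} {i : Emb Y X} {j : Emb Y Y'}

lemma Amalg.lt1_j'_i' (A : Amalg i j) {b : X.A} {a : Y.A} (h : X.lt1 b (i.f a)) :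
    A.Z.lt1 (A.j'.f b) (A.i'.f (j.f a)) :=
  A.comm a ▸ A.j'.mono1 _ _ h

lemma Amalg.lt2_j'_i' (A : Amalg i j) {b : X.A} {a : Y.A} (h : X.lt2 b (i.f a)) :
    A.Z.lt2 (A.j'.f b) (A.i'.f (j.f a)) :=
  A.comm a ▸ A.j'.mono2 _ _ h

lemma Amalg.lt2_i'_j' (A : Amalg i j) {b : X.A} {a : Y.A} (h : X.lt2 (i.f a) b) :
    A.Z.lt2 (A.i'.f (j.f a)) (A.j'.f b) :=
  A.comm a ▸ A.j'.mono2 _ _ h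

/-- Surjectivity is automatic: every point of `B.Z` lies in the image of `B.i'` or `B.j'`. -/
lemma AmalgIso.of_emb {A B : Amalg i j} (e : Emb A.Z B.Z) (hi : ∀ a, e.f (A.i'.f a) = B.i'.f a)
    (hj : ∀ b, e.f (A.j'.f b) = B.j'.f b) : AmalgIso A B := by
  refine ⟨e, fun z => ?_, hi, hj⟩
  rcases B.cover z with ⟨a, rfl⟩ | ⟨b, rfl⟩
  exacts [⟨_, hi a⟩, ⟨_, hj b⟩]

lemma AmalgIso.lt2_j'_i'_iff {A B : Amalg i j} (h : AmalgIso A B) (b : X.A) (a : Y'.A) :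
    A.Z.lt2 (A.j'.f b) (A.i'.f a) ↔ B.Z.lt2 (B.j'.f b) (B.i'.f a) := by
  obtain ⟨e, -, hi, hj⟩ := h
  rw [← hi, ← hj, e.lt2_iff]

end Amalg

theorem List.Pairwise.rel_of_lt {α β : Type*} [Preorder β] {f : α → β} {R : α → α → Prop}
    {l : List α} (hf : l.Pairwise fun a b => f a < f b) (hR : l.Pairwise R) {a b : α}
    (ha : a ∈ l) (hb : b ∈ l) (hab : f a < f b) : R a b := by
  induction l with
  | nil => simp at ha
  | cons c l ih =>
    rw [List.pairwise_cons] at hf hR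
    obtain rfl | ha' := List.mem_cons.1 ha
    · obtain rfl | hb' := List.mem_cons.1 hb
      exacts [absurd hab (lt_irrefl _), hR.1 b hb']
    · obtain rfl | hb' := List.mem_cons.1 hb
      exacts [absurd (hf.1 a ha') (lt_asymm hab), ih hf.2 hR.2 ha' hb']

namespace listPerm

def pt (l : List ℕ) (n : ℕ) (h : n ∈ l.toFinset := by decide) : (listPerm l).A := ⟨n, h⟩

lemma mem (l : List ℕ) (a : (listPerm l).A) : a.val ∈ l := List.mem_toFinset.1 a.2

def relabel (l m : List ℕ) (f : ℕ → ℕ) (hmem : ∀ x ∈ l, f x ∈ m := by decide)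
    (h1 : ∀ a ∈ l, ∀ b ∈ l, a < b → f a < f b := by decide)
    (h2 : ∀ a ∈ l, ∀ b ∈ l, l.idxOf a < l.idxOf b → m.idxOf (f a) < m.idxOf (f b) :=
      by decide) :
    Emb (listPerm l) (listPerm m) :=
  Emb.ofMono (fun x => ⟨f x.val, List.mem_toFinset.2 (hmem _ (mem l x))⟩)
    (fun a b => h1 _ (mem l a) _ (mem l b)) (fun a b => h2 _ (mem l a) _ (mem l b))

def incl (l m : List ℕ) (hmem : ∀ x ∈ l, x ∈ m := by decide)
    (h2 : ∀ a ∈ l, ∀ b ∈ l, l.idxOf a < l.idxOf b → m.idxOf a < m.idxOf b := by decide) :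
    Emb (listPerm l) (listPerm m) :=
  relabel l m id hmem (fun _ _ _ _ => id) h2

def embOfChains {Z : Perm2} (l s : List ℕ) (g : ℕ → Z.A) (h1 : (s.map g).IsChain Z.lt1)
    (h2 : (l.map g).IsChain Z.lt2) (hs : s.Pairwise (· < ·) := by decide)
    (hls : l ⊆ s := by decide) (hl : l.Pairwise (fun a b => l.idxOf a < l.idxOf b) := by decide) :
    Emb (listPerm l) Z :=
  Emb.ofMono (fun x => g x.val)
    (fun a b => hs.rel_of_lt (f := id) (List.pairwise_map.1 h1.pairwise)
      (hls (mem l a)) (hls (mem l b)))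
    (fun a b => hl.rel_of_lt (List.pairwise_map.1 h2.pairwise) (mem l a) (mem l b))

end listPerm

open listPerm

def baseEmb : Emb (listPerm [1, 3]) (listPerm [1, 0, 3]) := incl _ _
def midEmb : Emb (listPerm [1, 3]) (listPerm [1, 2, 3]) := incl _ _
def topEmb : Emb (listPerm [1, 3]) (listPerm [1, 3, 4]) := incl _ _

def midAmalg₁ : Amalg baseEmb midEmb :=
  ⟨listPerm [1, 0, 2, 3], incl _ _, incl _ _, by decide, by decide⟩
def midAmalg₂ : Amalg baseEmb midEmb :=
  ⟨listPerm [1, 2, 0, 3], incl _ _, incl _ _, by decide, by decide⟩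
def topAmalg : Amalg baseEmb topEmb :=
  ⟨listPerm [1, 0, 3, 4], incl _ _, incl _ _, by decide, by decide⟩

section midAmalg

variable (A : Amalg baseEmb midEmb)

def midPoint : ℕ → A.Z.A
  | 0 => A.j'.f (pt _ 0)
  | 1 => A.i'.f (pt _ 1)
  | 2 => A.i'.f (pt _ 2)
  | _ => A.i'.f (pt _ 3)

lemma midPoint_i' (a : (listPerm [1, 2, 3]).A) : midPoint A a.val = A.i'.f a := by
  obtain ⟨a, ha⟩ := a
  obtain rfl | rfl | rfl : a = 1 ∨ a = 2 ∨ a = 3 := by simpa using ha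
  all_goals rfl

lemma midPoint_j' (b : (listPerm [1, 0, 3]).A) : midPoint A b.val = A.j'.f b := by
  obtain ⟨b, hb⟩ := b
  obtain rfl | rfl | rfl : b = 1 ∨ b = 0 ∨ b = 3 := by simpa using hb
  exacts [A.comm (pt _ 1), rfl, A.comm (pt _ 3)]

lemma midPoint_lt1_chain : ([0, 1, 2, 3].map (midPoint A)).IsChain A.Z.lt1 :=
  .cons_cons (A.lt1_j'_i' (b := pt _ 0) (a := pt _ 1) (by decide))
    (.cons_cons (A.i'.mono1 _ _ (by decide))
      (.cons_cons (A.i'.mono1 _ _ (by decide)) (.singleton _)))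

lemma amalgIso_midAmalg₁ (h : A.Z.lt2 (A.j'.f (pt _ 0)) (A.i'.f (pt _ 2))) :
    AmalgIso midAmalg₁ A :=
  .of_emb (embOfChains [1, 0, 2, 3] [0, 1, 2, 3] (midPoint A) (midPoint_lt1_chain A)
      (.cons_cons (A.lt2_i'_j' (a := pt _ 1) (b := pt _ 0) (by decide))
        (.cons_cons h (.cons_cons (A.i'.mono2 _ _ (by decide)) (.singleton _)))))
    (midPoint_i' A) (midPoint_j' A)

lemma amalgIso_midAmalg₂ (h : A.Z.lt2 (A.i'.f (pt _ 2)) (A.j'.f (pt _ 0))) :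
    AmalgIso midAmalg₂ A :=
  .of_emb (embOfChains [1, 2, 0, 3] [0, 1, 2, 3] (midPoint A) (midPoint_lt1_chain A)
      (.cons_cons (A.i'.mono2 _ _ (by decide))
        (.cons_cons h
          (.cons_cons (A.lt2_j'_i' (b := pt _ 0) (a := pt _ 3) (by decide)) (.singleton _)))))
    (midPoint_i' A) (midPoint_j' A)

theorem midAmalg_classification : ∃! α : Fin 2, AmalgIso (![midAmalg₁, midAmalg₂] α) A := by
  rcases A.Z.lt2_trichotomy (A.j'.f (pt _ 0)) (A.i'.f (pt _ 2)) with h | h | h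
  · refine ⟨0, amalgIso_midAmalg₁ A h, Fin.forall_fin_two.2 ⟨fun _ => rfl, fun h₂ => ?_⟩⟩
    exact absurd ((h₂.lt2_j'_i'_iff _ _).2 h) (by decide)
  · have h₀₁ : A.Z.lt1 (A.j'.f (pt _ 0)) (A.i'.f (pt _ 1)) :=
      A.lt1_j'_i' (b := pt _ 0) (a := pt _ 1) (by decide)
    exact absurd h (Perm2.ne_of_lt1 (Perm2.lt1_trans h₀₁ (A.i'.mono1 _ _ (by decide))))
  · refine ⟨1, amalgIso_midAmalg₂ A h, Fin.forall_fin_two.2 ⟨fun h₁ => ?_, fun _ => rfl⟩⟩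
    exact absurd ((h₁.lt2_j'_i'_iff _ _).1 (by decide)) (A.Z.lt2_asymm h)

end midAmalg

section topAmalg

variable (A : Amalg baseEmb topEmb)

def topPoint : ℕ → A.Z.A
  | 0 => A.j'.f (pt _ 0)
  | 1 => A.i'.f (pt _ 1)
  | 3 => A.i'.f (pt _ 3)
  | _ => A.i'.f (pt _ 4)

lemma amalgIso_topAmalg : AmalgIso topAmalg A := by
  refine .of_emb (embOfChains [1, 0, 3, 4] [0, 1, 3, 4] (topPoint A)
    (.cons_cons (A.lt1_j'_i' (b := pt _ 0) (a := pt _ 1) (by decide))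
      (.cons_cons (A.i'.mono1 _ _ (by decide))
        (.cons_cons (A.i'.mono1 _ _ (by decide)) (.singleton _))))
    (.cons_cons (A.lt2_i'_j' (a := pt _ 1) (b := pt _ 0) (by decide))
      (.cons_cons (A.lt2_j'_i' (b := pt _ 0) (a := pt _ 3) (by decide))
        (.cons_cons (A.i'.mono2 _ _ (by decide)) (.singleton _))))) ?_ ?_
  · rintro ⟨a, ha⟩
    obtain rfl | rfl | rfl : a = 1 ∨ a = 3 ∨ a = 4 := by simpa using ha
    all_goals rfl
  · rintro ⟨b, hb⟩
    obtain rfl | rfl | rfl : b = 1 ∨ b = 0 ∨ b = 3 := by simpa using hb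
    exacts [A.comm (pt _ 1), rfl, A.comm (pt _ 3)]

theorem topAmalg_classification : ∃! α : Fin 1, AmalgIso (![topAmalg] α) A :=
  ⟨0, amalgIso_topAmalg A, fun α _ => Subsingleton.elim α 0⟩

end topAmalg

def shiftAboveOne (n : ℕ) : ℕ := if n ≤ 1 then n else n + 1

/-- There are no regular measures on the class of permutations: for every nonzero
commutative ring k and every k-valued measure, some embedding has non-unit measure. -/
theorem no_regular_measure (k : Type) [CommRing k] [Nontrivial k] (m : PMeasure k) :
    ∃ (X Y : Perm2) (i : Emb X Y), ¬IsUnit (m.μ i) := by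
  have hmid : m.μ baseEmb = m.μ midAmalg₁.i' + m.μ midAmalg₂.i' := by
    simpa [Fin.sum_univ_two] using m.amalg_sum baseEmb midEmb 2 _ midAmalg_classification
  have htop : m.μ baseEmb = m.μ topAmalg.i' := by
    simpa using m.amalg_sum baseEmb topEmb 1 _ topAmalg_classification
  have hiso : m.μ midAmalg₁.i' = m.μ topAmalg.i' :=
    m.iso_invariant _ _ (relabel [1, 2, 3] [1, 3, 4] shiftAboveOne)
      (relabel [1, 0, 2, 3] [1, 0, 3, 4] shiftAboveOne) (by decide) (by decide) (by decide)
  have hzero : m.μ midAmalg₂.i' = 0 := by linear_combination htop - hmid - hiso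
  exact ⟨_, _, midAmalg₂.i', hzero ▸ not_isUnit_zero⟩
end

section
/- Let X be a finite set with a linear order <, and let x, y be distinct elements of X such that no element of X lies strictly between x and y in the order < (x and y are <-adjacent). Then there are exactly two linear orders on X that agree with < on every pair of distinct elements other than {x, y}: the order < itself, and the order obtained from < by exchanging x and y (the pullback of < along the transposition of x and y). -/
/-- `s` agrees with `r` on every pair of distinct elements other than the pair {x, y}. -/
def agreesOff {α : Type} (s r : LinearOrder α) (x y : α) : Prop :=
  ∀ a b : α, a ≠ b → ¬((a = x ∧ b = y) ∨ (a = y ∧ b = x)) → (s.lt a b ↔ r.lt a b)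

section aux

variable {α : Type} (r : LinearOrder α)

lemma lo_tri (a b : α) : r.lt a b ∨ a = b ∨ r.lt b a := @lt_trichotomy α r a b

lemma lo_not_lt {a b : α} : ¬ r.lt a b ↔ r.le b a := @not_lt α r a b

lemma lo_irrefl (a : α) : ¬ r.lt a a := @lt_irrefl α r.toPreorder a

lemma lo_flip {x y : α} (h : x ≠ y) : ¬ r.lt x y ↔ r.lt y x := by
  rw [lo_not_lt]
  exact ⟨fun hle => @lt_of_le_of_ne α r.toPartialOrder y x hle h.symm,
    fun hlt => @le_of_lt α r.toPreorder y x hlt⟩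

lemma adj_left {x y : α}
    (hadj : ¬∃ z : α, (r.lt x z ∧ r.lt z y) ∨ (r.lt y z ∧ r.lt z x))
    {z : α} (hzx : z ≠ x) (hzy : z ≠ y) : r.lt x z ↔ r.lt y z := by
  constructor
  · intro h
    rcases lo_tri r y z with h' | h' | h'
    · exact h'
    · exact absurd h'.symm hzy
    · exact absurd ⟨z, Or.inl ⟨h, h'⟩⟩ hadj
  · intro h
    rcases lo_tri r x z with h' | h' | h'
    · exact h'
    · exact absurd h'.symm hzx
    · exact absurd ⟨z, Or.inr ⟨h, h'⟩⟩ hadj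

lemma adj_right {x y : α}
    (hadj : ¬∃ z : α, (r.lt x z ∧ r.lt z y) ∨ (r.lt y z ∧ r.lt z x))
    {z : α} (hzx : z ≠ x) (hzy : z ≠ y) : r.lt z x ↔ r.lt z y := by
  constructor
  · intro h
    rcases lo_tri r z y with h' | h' | h'
    · exact h'
    · exact absurd h' hzy
    · exact absurd ⟨z, Or.inr ⟨h', h⟩⟩ hadj
  · intro h
    rcases lo_tri r z x with h' | h' | h'
    · exact h'
    · exact absurd h' hzx
    · exact absurd ⟨z, Or.inl ⟨h', h⟩⟩ hadj

lemma lo_ext_of_lt {s : LinearOrder α} (h : ∀ a b, s.lt a b ↔ r.lt a b) : s = r := by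
  apply LinearOrder.ext
  intro a b
  show s.le a b ↔ r.le a b
  rw [← lo_not_lt s, ← lo_not_lt r, h]

end aux

/-- If x ≠ y are adjacent in the linear order r on a finite set (no element lies strictly
between them), then there are exactly two linear orders agreeing with r on every pair of
distinct elements other than {x, y}: the order r itself, and the pullback of r along the
transposition of x and y. -/
theorem two_orders_of_adjacent (α : Type) [Fintype α] [DecidableEq α] (r : LinearOrder α)
    (x y : α) (hxy : x ≠ y)
    (hadj : ¬∃ z : α, (r.lt x z ∧ r.lt z y) ∨ (r.lt y z ∧ r.lt z x)) :
    {s : LinearOrder α | agreesOff s r x y} =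
      {r, @LinearOrder.lift' α α r (⇑(Equiv.swap x y)) (Equiv.swap x y).injective} ∧
    r ≠ @LinearOrder.lift' α α r (⇑(Equiv.swap x y)) (Equiv.swap x y).injective := by
  set t := @LinearOrder.lift' α α r (⇑(Equiv.swap x y)) (Equiv.swap x y).injective with ht
  have tle : ∀ a b, t.le a b ↔ r.le (Equiv.swap x y a) (Equiv.swap x y b) := fun a b => Iff.rfl
  have tlt : ∀ a b, t.lt a b ↔ r.lt (Equiv.swap x y a) (Equiv.swap x y b) := fun a b =>
    (@not_le α t b a).symm.trans ((not_congr (tle b a)).trans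
      (@not_le α r ((Equiv.swap x y) b) ((Equiv.swap x y) a)))
  have swap_other : ∀ a b : α, a ≠ b → ¬((a = x ∧ b = y) ∨ (a = y ∧ b = x)) →
      (r.lt (Equiv.swap x y a) (Equiv.swap x y b) ↔ r.lt a b) := by
    intro a b hab hp
    by_cases hax : a = x
    · subst hax
      have hby : b ≠ y := fun h => hp (Or.inl ⟨rfl, h⟩)
      have hbx : b ≠ a := hab.symm
      rw [Equiv.swap_apply_left, Equiv.swap_apply_of_ne_of_ne hbx hby]
      exact (adj_left r hadj hbx hby).symm
    · by_cases hay : a = y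
      · subst hay
        have hbx : b ≠ x := fun h => hp (Or.inr ⟨rfl, h⟩)
        have hby : b ≠ a := hab.symm
        rw [Equiv.swap_apply_right, Equiv.swap_apply_of_ne_of_ne hbx hby]
        exact adj_left r hadj hbx hby
      · rw [Equiv.swap_apply_of_ne_of_ne hax hay]
        by_cases hbx : b = x
        · subst hbx
          rw [Equiv.swap_apply_left]
          exact (adj_right r hadj hax hay).symm
        · by_cases hby : b = y
          · subst hby
            rw [Equiv.swap_apply_right]
            exact adj_right r hadj hax hay
          · rw [Equiv.swap_apply_of_ne_of_ne hbx hby]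
  have hrt : r ≠ t := by
    intro h
    have hiff : r.le x y ↔ r.le y x := by
      have h0 := tle x y
      rw [← h, Equiv.swap_apply_left, Equiv.swap_apply_right] at h0
      exact h0
    rcases r.le_total x y with h1 | h1
    · exact hxy (r.le_antisymm x y h1 (hiff.mp h1))
    · exact hxy (r.le_antisymm x y (hiff.mpr h1) h1)
  refine ⟨?_, hrt⟩
  ext s
  simp only [Set.mem_setOf_eq, Set.mem_insert_iff, Set.mem_singleton_iff]
  constructor
  · intro hs
    by_cases hcase : s.lt x y ↔ r.lt x y
    · left
      apply lo_ext_of_lt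
      intro a b
      by_cases hab : a = b
      · subst hab
        exact iff_of_false (lo_irrefl s a) (lo_irrefl r a)
      · by_cases hp : (a = x ∧ b = y) ∨ (a = y ∧ b = x)
        · rcases hp with ⟨hax, hby⟩ | ⟨hay, hbx⟩
          · subst hax; subst hby; exact hcase
          · subst hay; subst hbx
            exact ((lo_flip s hxy).symm.trans (not_congr hcase)).trans (lo_flip r hxy)
        · exact hs a b hab hp
    · -- mismatched case : s = t
      have hkey : s.lt x y ↔ r.lt y x := by
        rcases lo_tri s x y with h1 | h1 | h1
        · have h2 : ¬ r.lt x y := fun h2 => hcase (iff_of_true h1 h2)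
          exact iff_of_true h1 ((lo_flip r hxy).mp h2)
        · exact absurd h1 hxy
        · have h2 : ¬ s.lt x y := (lo_flip s hxy).mpr h1
          have h3 : r.lt x y := by
            by_contra h4
            exact hcase (iff_of_false h2 h4)
          exact iff_of_false h2 ((lo_flip r hxy.symm).mpr h3)
      right
      apply lo_ext_of_lt t
      intro a b
      rw [tlt]
      by_cases hab : a = b
      · subst hab
        exact iff_of_false (lo_irrefl s a) (lo_irrefl r _)
      · by_cases hp : (a = x ∧ b = y) ∨ (a = y ∧ b = x)
        · rcases hp with ⟨hax, hby⟩ | ⟨hay, hbx⟩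
          · subst hax; subst hby
            rw [Equiv.swap_apply_left, Equiv.swap_apply_right]
            exact hkey
          · subst hay; subst hbx
            rw [Equiv.swap_apply_right, Equiv.swap_apply_left]
            exact ((lo_flip s hxy).symm.trans (not_congr hkey)).trans (lo_flip r hxy.symm)
        · rw [hs a b hab hp, (swap_other a b hab hp)]
  · rintro (rfl | rfl)
    · exact fun a b _ _ => Iff.rfl
    · intro a b hab hp
      rw [tlt]
      exact swap_other a b hab hp
end

section
/- Let X be a permutation and let x ≠ y be elements of X. The bijection X∖{y} → X∖{x} that fixes every element of X∖{x, y} and sends x to y is an isomorphism of permutations (i.e., preserves both induced orders) if and only if x and y are both <-adjacent and ≺-adjacent in X. -/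
/-- Two distinct elements are adjacent for the linear order `r` if no element lies
strictly between them. -/
def Adj {α : Type} (r : LinearOrder α) (x y : α) : Prop :=
  x ≠ y ∧ ¬∃ z : α, (r.lt x z ∧ r.lt z y) ∨ (r.lt y z ∧ r.lt z x)

/-- Two elements of a permutation are neighbors if they are adjacent for either of the
two orders. -/
def Neighbors (X : Perm2) (x y : X.A) : Prop :=
  Adj X.ord1 x y ∨ Adj X.ord2 x y

lemma swap_iso_iff_adj {α : Type} [DecidableEq α] (r : LinearOrder α) (x y : α)
    (hxy : x ≠ y) :
    (∀ a b : α, a ≠ y → b ≠ y →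
        (r.lt a b ↔ r.lt (Equiv.swap x y a) (Equiv.swap x y b))) ↔ Adj r x y := by
  letI := r
  have hlt : r.lt = (· < ·) := rfl
  constructor
  · intro h
    refine ⟨hxy, ?_⟩
    rintro ⟨z, ⟨h1, h2⟩ | ⟨h1, h2⟩⟩
    · rw [hlt] at h1 h2
      have hzx : z ≠ x := fun e => lt_irrefl x (e ▸ h1)
      have hzy : z ≠ y := fun e => lt_irrefl y (e ▸ h2)
      have h3 := (h x z hxy hzy).mp h1
      rw [hlt, Equiv.swap_apply_left, Equiv.swap_apply_of_ne_of_ne hzx hzy] at h3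
      exact absurd h3 (not_lt_of_gt h2)
    · rw [hlt] at h1 h2
      have hzx : z ≠ x := fun e => lt_irrefl x (e ▸ h2)
      have hzy : z ≠ y := fun e => lt_irrefl y (e ▸ h1)
      have h3 := (h z x hzy hxy).mp h2
      rw [hlt, Equiv.swap_apply_left, Equiv.swap_apply_of_ne_of_ne hzx hzy] at h3
      exact absurd h3 (not_lt_of_gt h1)
  · rintro ⟨-, hadj⟩ a b ha hb
    rw [hlt] at hadj ⊢
    by_cases hax : a = x
    · subst hax
      by_cases hbx : b = a
      · subst hbx
        simp
      · rw [Equiv.swap_apply_left, Equiv.swap_apply_of_ne_of_ne hbx hb]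
        constructor
        · intro hab
          by_contra h'
          have hby : b < y := lt_of_le_of_ne (le_of_not_gt h') hb
          exact hadj ⟨b, Or.inl ⟨hab, hby⟩⟩
        · intro hyb
          by_contra h'
          have hbx' : b < a := lt_of_le_of_ne (le_of_not_gt h') hbx
          exact hadj ⟨b, Or.inr ⟨hyb, hbx'⟩⟩
    · by_cases hbx : b = x
      · subst hbx
        rw [Equiv.swap_apply_left, Equiv.swap_apply_of_ne_of_ne hax ha]
        constructor
        · intro hab
          by_contra h'
          have hya : y < a := lt_of_le_of_ne (le_of_not_gt h') (Ne.symm ha)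
          exact hadj ⟨a, Or.inr ⟨hya, hab⟩⟩
        · intro hay
          by_contra h'
          have hxa : b < a := lt_of_le_of_ne (le_of_not_gt h') (Ne.symm hax)
          exact hadj ⟨a, Or.inl ⟨hxa, hay⟩⟩
      · rw [Equiv.swap_apply_of_ne_of_ne hax ha, Equiv.swap_apply_of_ne_of_ne hbx hb]

/-- The bijection X∖{y} → X∖{x} fixing X∖{x,y} and sending x to y (here implemented by
the transposition of x and y, restricted to elements distinct from y) is an isomorphism
of permutations if and only if x and y are adjacent in both orders. -/
theorem swap_iso_iff_doubly_adjacent (X : Perm2) [DecidableEq X.A] (x y : X.A)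
    (hxy : x ≠ y) :
    ((∀ a b : X.A, a ≠ y → b ≠ y →
        (X.ord1.lt a b ↔ X.ord1.lt (Equiv.swap x y a) (Equiv.swap x y b))) ∧
     (∀ a b : X.A, a ≠ y → b ≠ y →
        (X.ord2.lt a b ↔ X.ord2.lt (Equiv.swap x y a) (Equiv.swap x y b))))
    ↔ (Adj X.ord1 x y ∧ Adj X.ord2 x y) := by
  exact and_congr (swap_iso_iff_adj X.ord1 x y hxy) (swap_iso_iff_adj X.ord2 x y hxy)
end

section
/- The number of minimal marked permutations, up to isomorphism, is exactly 87. Equivalently: the number of pairs (w, m), where w is a bijection of {1,…,n} to itself for some n ≥ 1 and m ∈ {1,…,n}, such that in the permutation structure on {1,…,n} given by the usual order < together with the order i ≺ j ⟺ w⁻¹(i) < w⁻¹(j), every element other than m is a neighbor of m, equals 87. -/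
/-- The normalized permutation on {1,…,n} (modelled by `Fin n`) determined by a
bijection w: the first order is the usual one, and i ≺ j ⟺ w⁻¹(i) < w⁻¹(j). -/
def mkPerm (n : ℕ) (w : Equiv.Perm (Fin n)) : Perm2 where
  A := Fin n
  fin := inferInstance
  ord1 := inferInstance
  ord2 := LinearOrder.lift' (fun i => w.symm i) w.symm.injective

/-! In each of the two orders the marked point has at most one adjacent element above it and
one below it, so a minimal marked permutation has at most `1 + 2 + 2 = 5` elements. This
leaves finitely many candidates (`n ≤ 5`), which are enumerated by `decide`. -/

open Finset

instance decidableAdj {α : Type} [Fintype α] (r : LinearOrder α) (x y : α) :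
    Decidable (Adj r x y) :=
  letI := r
  inferInstanceAs (Decidable (_ ∧ ¬∃ _, _))

instance decidableNeighbors (X : Perm2) (x y : X.A) : Decidable (Neighbors X x y) :=
  inferInstanceAs (Decidable (_ ∨ _))

-- Instance search does not unfold `(mkPerm n w).A` to `Fin n`.
instance decidableNeighborsMkPerm (n : ℕ) (w : Equiv.Perm (Fin n)) (x y : Fin n) :
    Decidable (Neighbors (mkPerm n w) x y) :=
  decidableNeighbors (mkPerm n w) x y

theorem Adj.eq_of_lt_iff_lt {α : Type} {r : LinearOrder α} {x y z : α} (hy : Adj r x y)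
    (hz : Adj r x z) (h : r.lt x y ↔ r.lt x z) : y = z := by
  let _ := r
  by_contra hyz
  rcases lt_or_gt_of_ne hyz with hlt | hlt
  · by_cases hx : x < y
    · exact hz.2 ⟨y, .inl ⟨hx, hlt⟩⟩
    · have hzx : z < x := (hz.1.symm.lt_or_gt).resolve_right (mt h.2 hx)
      exact hy.2 ⟨z, .inr ⟨hlt, hzx⟩⟩
  · by_cases hx : x < z
    · exact hy.2 ⟨z, .inl ⟨hx, hlt⟩⟩
    · have hyx : y < x := (hy.1.symm.lt_or_gt).resolve_right (mt h.1 hx)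
      exact hz.2 ⟨y, .inr ⟨hlt, hyx⟩⟩

section adjFinset

variable {α : Type} [Fintype α] (r : LinearOrder α) (x : α)

def adjFinset : Finset α := {y | Adj r x y}

@[simp]
theorem mem_adjFinset {y : α} : y ∈ adjFinset r x ↔ Adj r x y := by
  simp [adjFinset]

theorem card_adjFinset_le_two : #(adjFinset r x) ≤ 2 :=
  card_le_card_of_injOn (fun y => decide (r.lt x y)) (fun _ _ => mem_univ _)
    fun y hy z hz h => ((mem_adjFinset r x).1 hy).eq_of_lt_iff_lt ((mem_adjFinset r x).1 hz)
      (by simpa using h)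

end adjFinset

theorem Perm2.card_le_five_of_forall_neighbors (X : Perm2) (m : X.A)
    (h : ∀ y, y ≠ m → Neighbors X m y) : Fintype.card X.A ≤ 5 := by
  classical
  have hcover : univ ⊆ insert m (adjFinset X.ord1 m ∪ adjFinset X.ord2 m) := by
    intro y _
    by_cases hy : y = m
    · simp [hy]
    · simpa [hy, Neighbors] using h y hy
  calc Fintype.card X.A
      ≤ #(insert m (adjFinset X.ord1 m ∪ adjFinset X.ord2 m)) := card_le_card hcover
    _ ≤ #(adjFinset X.ord1 m) + #(adjFinset X.ord2 m) + 1 :=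
        (card_insert_le _ _).trans (Nat.add_le_add_right (card_union_le _ _) 1)
    _ ≤ 2 + 2 + 1 := by
        gcongr <;> exact card_adjFinset_le_two _ m

set_option maxRecDepth 100000 in
/-- There are exactly 87 minimal marked permutations up to isomorphism: the number of
pairs (w, m) with w a bijection of {1,…,n} for some n ≥ 1 and m a marked point such that
every other element is a neighbor of m, equals 87. -/
theorem card_minimal_marked_permutations :
    Nat.card {p : Σ n : ℕ, Equiv.Perm (Fin n) × Fin n //
      ∀ y : Fin p.1, y ≠ p.2.2 → Neighbors (mkPerm p.1 p.2.1) p.2.2 y} = 87 := by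
  have hsize (n : ℕ) (w : Equiv.Perm (Fin n)) (m : Fin n)
      (h : ∀ y, y ≠ m → Neighbors (mkPerm n w) m y) : n < 6 := by
    have hcard : Fintype.card (Fin n) ≤ 5 := (mkPerm n w).card_le_five_of_forall_neighbors m h
    exact Nat.lt_succ_of_le (by simpa using hcard)
  let e : {p : Σ n : ℕ, Equiv.Perm (Fin n) × Fin n //
      ∀ y : Fin p.1, y ≠ p.2.2 → Neighbors (mkPerm p.1 p.2.1) p.2.2 y} ≃
      {p : Σ n : Fin 6, Equiv.Perm (Fin n) × Fin n //
      ∀ y : Fin p.1, y ≠ p.2.2 → Neighbors (mkPerm p.1 p.2.1) p.2.2 y} :=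
    { toFun p := ⟨⟨⟨p.1.1, hsize _ _ _ p.2⟩, p.1.2⟩, p.2⟩
      invFun q := ⟨⟨q.1.1, q.1.2⟩, q.2⟩ }
  rw [Nat.card_congr e, Nat.card_eq_fintype_card]
  decide
end

section
/- Let X be a permutation and let a ≠ b be elements of X such that a and b are neighbors and every element of X∖{a, b} is a neighbor of a or a neighbor of b. Then X has at most eight elements. -/
theorem Adj.symm {α : Type} {r : LinearOrder α} {x y : α} (h : Adj r x y) : Adj r y x :=
  ⟨h.1.symm, fun ⟨z, hz⟩ => h.2 ⟨z, hz.symm⟩⟩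

theorem Neighbors.symm {X : Perm2} {x y : X.A} (h : Neighbors X x y) : Neighbors X y x :=
  h.imp Adj.symm Adj.symm

theorem ncard_setOf_adj_le_two {α : Type} (r : LinearOrder α) (x : α) :
    {y | Adj r x y}.ncard ≤ 2 := by
  let _ := r
  have above : {y | Adj r x y ∧ x < y}.Subsingleton := by
    intro y₁ hy₁ y₂ hy₂
    by_contra hne
    rcases lt_or_gt_of_ne hne with hlt | hgt
    · exact hy₂.1.2 ⟨y₁, Or.inl ⟨hy₁.2, hlt⟩⟩
    · exact hy₁.1.2 ⟨y₂, Or.inl ⟨hy₂.2, hgt⟩⟩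
  have below : {y | Adj r x y ∧ y < x}.Subsingleton := by
    intro y₁ hy₁ y₂ hy₂
    by_contra hne
    rcases lt_or_gt_of_ne hne with hlt | hgt
    · exact hy₁.1.2 ⟨y₂, Or.inr ⟨hlt, hy₂.2⟩⟩
    · exact hy₂.1.2 ⟨y₁, Or.inr ⟨hgt, hy₁.2⟩⟩
  have hsplit : {y | Adj r x y} ⊆ {y | Adj r x y ∧ x < y} ∪ {y | Adj r x y ∧ y < x} :=
    fun y hy => (lt_or_gt_of_ne hy.1).imp (⟨hy, ·⟩) (⟨hy, ·⟩)
  calc {y | Adj r x y}.ncard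
      ≤ ({y | Adj r x y ∧ x < y} ∪ {y | Adj r x y ∧ y < x}).ncard :=
        Set.ncard_le_ncard hsplit (above.finite.union below.finite)
    _ ≤ {y | Adj r x y ∧ x < y}.ncard + {y | Adj r x y ∧ y < x}.ncard := Set.ncard_union_le _ _
    _ ≤ 1 + 1 := add_le_add ((Set.ncard_le_one above.finite).2 above)
        ((Set.ncard_le_one below.finite).2 below)

theorem ncard_setOf_neighbors_le_four (X : Perm2) (x : X.A) :
    {y | Neighbors X x y}.ncard ≤ 4 :=
  calc {y | Neighbors X x y}.ncard
      ≤ {y | Adj X.ord1 x y}.ncard + {y | Adj X.ord2 x y}.ncard := Set.ncard_union_le _ _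
    _ ≤ 2 + 2 := add_le_add (ncard_setOf_adj_le_two _ x) (ncard_setOf_adj_le_two _ x)

theorem minimal_Q_datum_le_eight_general (X : Perm2) (a b : X.A)
    (hn : Neighbors X a b)
    (h : ∀ c : X.A, c ≠ a → c ≠ b → Neighbors X a c ∨ Neighbors X b c) :
    Nat.card X.A ≤ 8 := by
  have hcover : {y | Neighbors X a y} ∪ {y | Neighbors X b y} = Set.univ := by
    refine Set.eq_univ_of_forall fun c => ?_
    by_cases hca : c = a
    · exact Or.inr (hca ▸ hn.symm)
    by_cases hcb : c = b
    · exact Or.inl (hcb ▸ hn)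
    exact h c hca hcb
  calc Nat.card X.A = ({y | Neighbors X a y} ∪ {y | Neighbors X b y}).ncard := by
        rw [hcover, Set.ncard_univ]
    _ ≤ {y | Neighbors X a y}.ncard + {y | Neighbors X b y}.ncard := Set.ncard_union_le _ _
    _ ≤ 4 + 4 := add_le_add (ncard_setOf_neighbors_le_four X a) (ncard_setOf_neighbors_le_four X b)

/-- If a and b are neighbors in a permutation X and every other element is a neighbor
of a or of b, then X has at most eight elements. -/
theorem minimal_Q_datum_le_eight (X : Perm2) (a b : X.A) (hab : a ≠ b)
    (hn : Neighbors X a b)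
    (h : ∀ c : X.A, c ≠ a → c ≠ b → Neighbors X a c ∨ Neighbors X b c) :
    Nat.card X.A ≤ 8 :=
  minimal_Q_datum_le_eight_general X a b hn h
end

section
/- For every commutative ring k, every k-valued measure μ on the class of permutations, and every permutation X that admits an embedding of the permutation 1342 (the four-element permutation with orders 1<2<3<4 and 1≺3≺4≺2), one has μ(∅ ⊂ X) = 0, where ∅ ⊂ X denotes the embedding of the empty permutation into X. -/
/-!
Amalgamate the embedding `13 ⊂ 132` with two embeddings of `13` into `123`: the one fixing the
values `1, 3`, and the one sending them to `2, 3`. In the first case the two new points (the `2`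
of `123` and the `2` of `132`) are distinct, being ordered apart by the second order, and may lie
either way in the first order, giving the amalgamations `1243` and `1342`. In the second case
everything is forced and only `1243` arises, with the same embedding `123 ⊂ 1243`. Comparing the
two instances of the amalgamation axiom gives `μ(123 ⊂ 1342) = 0`, and `∅ ⊂ X` factors through it.
-/

namespace Perm2

variable (X : Perm2)

instance inst_s17 : Trans X.lt1 X.lt1 X.lt1 where
  trans h h' := @lt_trans _ X.ord1.toPreorder _ _ _ h h'

instance inst_s17_2 : Trans X.lt2 X.lt2 X.lt2 where
  trans h h' := @lt_trans _ X.ord2.toPreorder _ _ _ h h'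

variable {X}

theorem lt1_irrefl (a : X.A) : ¬ X.lt1 a a := by
  let := X.ord1; exact lt_irrefl a

theorem lt1_asymm {a b : X.A} (h : X.lt1 a b) : ¬ X.lt1 b a := by
  let := X.ord1; exact lt_asymm h

theorem lt1_trichotomy (a b : X.A) : X.lt1 a b ∨ a = b ∨ X.lt1 b a := by
  let := X.ord1; exact lt_trichotomy a b

theorem ne_of_lt2 {a b : X.A} (h : X.lt2 a b) : a ≠ b := by
  let := X.ord2; exact ne_of_lt h

end Perm2

namespace Emb

variable {X Y : Perm2}

theorem ext {i j : Emb X Y} (h : i.f = j.f) : i = j := by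
  cases i; cases j; subst h; rfl

instance [IsEmpty X.A] : Subsingleton (Emb X Y) :=
  ⟨fun _ _ => ext (funext isEmptyElim)⟩

def ofIsEmpty (X Y : Perm2) [IsEmpty X.A] : Emb X Y where
  f := isEmptyElim
  inj a := isEmptyElim a
  mono1 a := isEmptyElim a
  mono2 a := isEmptyElim a

def ofStrictMono (f : X.A → Y.A) (h1 : ∀ a b, X.lt1 a b → Y.lt1 (f a) (f b))
    (h2 : ∀ a b, X.lt2 a b → Y.lt2 (f a) (f b)) : Emb X Y where
  f := f
  inj a b hab := by
    rcases Perm2.lt1_trichotomy a b with h | h | h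
    · exact absurd (hab ▸ h1 a b h) (Perm2.lt1_irrefl _)
    · exact h
    · exact absurd (hab ▸ h1 b a h) (Perm2.lt1_irrefl _)
  mono1 := h1
  mono2 := h2

end Emb

namespace listPerm

instance : IsEmpty (listPerm []).A :=
  ⟨fun a => by simpa using a.2⟩

instance (l : List ℕ) : DecidableEq (listPerm l).A :=
  inferInstanceAs (DecidableEq {n : ℕ // n ∈ l.toFinset})

-- Stated for the underlying subtype, so that instance search finds them for points `⟨n, h⟩`.
instance (l : List ℕ) (a b : {n // n ∈ l.toFinset}) : Decidable ((listPerm l).lt1 a b) :=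
  inferInstanceAs (Decidable (a.val < b.val))

instance (l : List ℕ) (a b : {n // n ∈ l.toFinset}) : Decidable ((listPerm l).lt2 a b) :=
  inferInstanceAs (Decidable (l.idxOf a.val < l.idxOf b.val))

theorem forall_three {a b c : ℕ} {P : (listPerm [a, b, c]).A → Prop} :
    (∀ y, P y) ↔ P ⟨a, by simp⟩ ∧ P ⟨b, by simp⟩ ∧ P ⟨c, by simp⟩ := by
  refine ⟨fun h => ⟨h _, h _, h _⟩, fun ⟨ha, hb, hc⟩ ⟨n, hn⟩ => ?_⟩
  simp only [List.mem_toFinset, List.mem_cons, List.not_mem_nil, or_false] at hn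
  rcases hn with rfl | rfl | rfl
  exacts [ha, hb, hc]

def embOfMap (l₁ l₂ : List ℕ) (g : ℕ → ℕ) (hg : ∀ a : (listPerm l₁).A, g a.val ∈ l₂.toFinset)
    (h1 : ∀ a b : (listPerm l₁).A, a.val < b.val → g a.val < g b.val)
    (h2 : ∀ a b : (listPerm l₁).A,
      l₁.idxOf a.val < l₁.idxOf b.val → l₂.idxOf (g a.val) < l₂.idxOf (g b.val)) :
    Emb (listPerm l₁) (listPerm l₂) :=
  Emb.ofStrictMono (fun a => ⟨g a.val, hg a⟩) h1 h2

/-- `l` lists `1, …, n` in the second order; by transitivity it suffices to compare consecutive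
elements, along `1, …, n` for the first order and along `l` for the second. -/
def embOfIsChain {Z : Perm2} (l : List ℕ) (hl : ∀ n ∈ l, n ∈ List.range' 1 l.length)
    (g : ℕ → Z.A) (h1 : ((List.range' 1 l.length).map g).IsChain Z.lt1)
    (h2 : (l.map g).IsChain Z.lt2) : Emb (listPerm l) Z := by
  refine Emb.ofStrictMono (fun a => g a.val) (fun a b hab => ?_) (fun a b hab => ?_)
  · have hab : a.val < b.val := hab
    obtain ⟨ha₁, ha₂⟩ := List.mem_range'_1.1 (hl a.val (List.mem_toFinset.1 a.2))
    obtain ⟨hb₁, hb₂⟩ := List.mem_range'_1.1 (hl b.val (List.mem_toFinset.1 b.2))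
    have := List.pairwise_iff_getElem.1 (List.isChain_iff_pairwise.1 h1) (a.val - 1) (b.val - 1)
      (by simp only [List.length_map, List.length_range']; omega)
      (by simp only [List.length_map, List.length_range']; omega) (by omega)
    simpa [List.getElem_range', Nat.add_sub_cancel' ha₁, Nat.add_sub_cancel' hb₁] using this
  · have ha := List.idxOf_lt_length_of_mem (List.mem_toFinset.1 a.2)
    have hb := List.idxOf_lt_length_of_mem (List.mem_toFinset.1 b.2)
    have := List.pairwise_iff_getElem.1 (List.isChain_iff_pairwise.1 h2) _ _
      (by simpa using ha) (by simpa using hb) hab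
    simpa [List.getElem_idxOf] using this

end listPerm

namespace AmalgIso

variable {Y X Y' : Perm2} {i : Emb Y X} {j : Emb Y Y'} {R A : Amalg i j}

theorem of_emb_s17 (e : Emb R.Z A.Z) (hi : ∀ y, e.f (R.i'.f y) = A.i'.f y)
    (hj : ∀ x, e.f (R.j'.f x) = A.j'.f x) : AmalgIso R A := by
  refine ⟨e, fun z => ?_, hi, hj⟩
  rcases A.cover z with ⟨y, rfl⟩ | ⟨x, rfl⟩
  · exact ⟨_, hi y⟩
  · exact ⟨_, hj x⟩

theorem lt1_i'_j' (h : AmalgIso R A) {y : Y'.A} {x : X.A}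
    (hR : R.Z.lt1 (R.i'.f y) (R.j'.f x)) : A.Z.lt1 (A.i'.f y) (A.j'.f x) := by
  obtain ⟨e, -, hi, hj⟩ := h
  simpa only [hi, hj] using e.mono1 _ _ hR

theorem lt1_j'_i' (h : AmalgIso R A) {y : Y'.A} {x : X.A}
    (hR : R.Z.lt1 (R.j'.f x) (R.i'.f y)) : A.Z.lt1 (A.j'.f x) (A.i'.f y) := by
  obtain ⟨e, -, hi, hj⟩ := h
  simpa only [hi, hj] using e.mono1 _ _ hR

end AmalgIso

def emb13_132 : Emb (listPerm [1,3]) (listPerm [1,3,2]) :=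
  listPerm.embOfMap _ _ id (by decide) (by decide) (by decide)

def emb13_123 : Emb (listPerm [1,3]) (listPerm [1,2,3]) :=
  listPerm.embOfMap _ _ id (by decide) (by decide) (by decide)

def emb13_123' : Emb (listPerm [1,3]) (listPerm [1,2,3]) :=
  listPerm.embOfMap _ _ (fun | 1 => 2 | n => n) (by decide) (by decide) (by decide)

def emb123_1243 : Emb (listPerm [1,2,3]) (listPerm [1,2,4,3]) :=
  listPerm.embOfMap _ _ (fun | 3 => 4 | n => n) (by decide) (by decide) (by decide)

def emb132_1243 : Emb (listPerm [1,3,2]) (listPerm [1,2,4,3]) :=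
  listPerm.embOfMap _ _ (fun | 1 => 1 | 2 => 3 | _ => 4) (by decide) (by decide) (by decide)

def emb132_1243' : Emb (listPerm [1,3,2]) (listPerm [1,2,4,3]) :=
  listPerm.embOfMap _ _ (· + 1) (by decide) (by decide) (by decide)

def emb123_1342 : Emb (listPerm [1,2,3]) (listPerm [1,3,4,2]) :=
  listPerm.embOfMap _ _ (fun | 1 => 1 | n => n + 1) (by decide) (by decide) (by decide)

def emb132_1342 : Emb (listPerm [1,3,2]) (listPerm [1,3,4,2]) :=
  listPerm.embOfMap _ _ (fun | 3 => 4 | n => n) (by decide) (by decide) (by decide)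

def amalg1243 : Amalg emb13_132 emb13_123 :=
  ⟨listPerm [1,2,4,3], emb123_1243, emb132_1243, by decide, by decide⟩

def amalg1342 : Amalg emb13_132 emb13_123 :=
  ⟨listPerm [1,3,4,2], emb123_1342, emb132_1342, by decide, by decide⟩

def amalg1243' : Amalg emb13_132 emb13_123' :=
  ⟨listPerm [1,2,4,3], emb123_1243, emb132_1243', by decide, by decide⟩

section OverEmb13_123

variable (A : Amalg emb13_132 emb13_123)

theorem amalgIso_amalg1243
    (h : A.Z.lt1 (A.i'.f ⟨2, by decide⟩) (A.j'.f ⟨2, by decide⟩)) : AmalgIso amalg1243 A := by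
  have c1 : A.i'.f ⟨1, by decide⟩ = A.j'.f ⟨1, by decide⟩ := A.comm ⟨1, by decide⟩
  have c3 : A.i'.f ⟨3, by decide⟩ = A.j'.f ⟨3, by decide⟩ := A.comm ⟨3, by decide⟩
  refine AmalgIso.of_emb_s17 (listPerm.embOfIsChain [1,2,4,3] (by decide)
    (fun | 1 => A.i'.f ⟨1, by decide⟩ | 2 => A.i'.f ⟨2, by decide⟩
         | 3 => A.j'.f ⟨2, by decide⟩ | _ => A.i'.f ⟨3, by decide⟩) ?_ ?_) ?_ ?_
  · refine .cons_cons (A.i'.mono1 _ _ (by decide)) (.cons_cons h (.cons_cons ?_ (.singleton _)))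
    rw [c3]; exact A.j'.mono1 _ _ (by decide)
  · refine .cons_cons (A.i'.mono2 _ _ (by decide))
      (.cons_cons (A.i'.mono2 _ _ (by decide)) (.cons_cons ?_ (.singleton _)))
    rw [c3]; exact A.j'.mono2 _ _ (by decide)
  · exact listPerm.forall_three.2 ⟨rfl, rfl, rfl⟩
  · exact listPerm.forall_three.2 ⟨c1, c3, rfl⟩

theorem amalgIso_amalg1342
    (h : A.Z.lt1 (A.j'.f ⟨2, by decide⟩) (A.i'.f ⟨2, by decide⟩)) : AmalgIso amalg1342 A := by
  have c1 : A.i'.f ⟨1, by decide⟩ = A.j'.f ⟨1, by decide⟩ := A.comm ⟨1, by decide⟩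
  have c3 : A.i'.f ⟨3, by decide⟩ = A.j'.f ⟨3, by decide⟩ := A.comm ⟨3, by decide⟩
  refine AmalgIso.of_emb_s17 (listPerm.embOfIsChain [1,3,4,2] (by decide)
    (fun | 1 => A.i'.f ⟨1, by decide⟩ | 2 => A.j'.f ⟨2, by decide⟩
         | 3 => A.i'.f ⟨2, by decide⟩ | _ => A.i'.f ⟨3, by decide⟩) ?_ ?_) ?_ ?_
  · refine .cons_cons ?_ (.cons_cons h (.cons_cons (A.i'.mono1 _ _ (by decide)) (.singleton _)))
    rw [c1]; exact A.j'.mono1 _ _ (by decide)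
  · refine .cons_cons (A.i'.mono2 _ _ (by decide))
      (.cons_cons (A.i'.mono2 _ _ (by decide)) (.cons_cons ?_ (.singleton _)))
    rw [c3]; exact A.j'.mono2 _ _ (by decide)
  · exact listPerm.forall_three.2 ⟨rfl, rfl, rfl⟩
  · exact listPerm.forall_three.2 ⟨c1, c3, rfl⟩

theorem existsUnique_amalgIso_emb13_123 :
    ∃! α : Fin 2, AmalgIso (![amalg1243, amalg1342] α) A := by
  have c3 : A.i'.f ⟨3, by decide⟩ = A.j'.f ⟨3, by decide⟩ := A.comm ⟨3, by decide⟩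
  have hne : A.i'.f ⟨2, by decide⟩ ≠ A.j'.f ⟨2, by decide⟩ := by
    refine Perm2.ne_of_lt2 (trans (A.i'.mono2 _ ⟨3, by decide⟩ (by decide)) ?_)
    rw [c3]; exact A.j'.mono2 _ _ (by decide)
  rcases Perm2.lt1_trichotomy (A.i'.f ⟨2, by decide⟩) (A.j'.f ⟨2, by decide⟩) with h | h | h
  · refine ⟨0, amalgIso_amalg1243 A h, Fin.forall_fin_two.2 ⟨fun _ => rfl, fun h₁ => ?_⟩⟩
    change AmalgIso amalg1342 A at h₁
    refine (Perm2.lt1_asymm h (h₁.lt1_j'_i' ?_)).elim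
    show (listPerm [1,3,4,2]).lt1 ⟨2, by decide⟩ ⟨3, by decide⟩
    decide
  · exact absurd h hne
  · refine ⟨1, amalgIso_amalg1342 A h, Fin.forall_fin_two.2 ⟨fun h₀ => ?_, fun _ => rfl⟩⟩
    change AmalgIso amalg1243 A at h₀
    refine (Perm2.lt1_asymm h (h₀.lt1_i'_j' ?_)).elim
    show (listPerm [1,2,4,3]).lt1 ⟨2, by decide⟩ ⟨3, by decide⟩
    decide

end OverEmb13_123

theorem amalgIso_amalg1243' (A : Amalg emb13_132 emb13_123') : AmalgIso amalg1243' A := by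
  have c1 : A.i'.f ⟨2, by decide⟩ = A.j'.f ⟨1, by decide⟩ := by exact A.comm ⟨1, by decide⟩
  have c3 : A.i'.f ⟨3, by decide⟩ = A.j'.f ⟨3, by decide⟩ := A.comm ⟨3, by decide⟩
  refine AmalgIso.of_emb_s17 (listPerm.embOfIsChain [1,2,4,3] (by decide)
    (fun | 1 => A.i'.f ⟨1, by decide⟩ | 2 => A.i'.f ⟨2, by decide⟩
         | 3 => A.j'.f ⟨2, by decide⟩ | _ => A.i'.f ⟨3, by decide⟩) ?_ ?_) ?_ ?_
  · refine .cons_cons (A.i'.mono1 _ _ (by decide)) (.cons_cons ?_ (.cons_cons ?_ (.singleton _)))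
    · rw [c1]; exact A.j'.mono1 _ _ (by decide)
    · rw [c3]; exact A.j'.mono1 _ _ (by decide)
  · refine .cons_cons (A.i'.mono2 _ _ (by decide))
      (.cons_cons (A.i'.mono2 _ _ (by decide)) (.cons_cons ?_ (.singleton _)))
    rw [c3]; exact A.j'.mono2 _ _ (by decide)
  · exact listPerm.forall_three.2 ⟨rfl, rfl, rfl⟩
  · exact listPerm.forall_three.2 ⟨c1, c3, rfl⟩

theorem PMeasure.μ_emb123_1342_eq_zero {k : Type} [CommRing k] (m : PMeasure k) :
    m.μ emb123_1342 = 0 := by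
  have h₁ := m.amalg_sum emb13_132 emb13_123 2 _ existsUnique_amalgIso_emb13_123
  have h₂ := m.amalg_sum emb13_132 emb13_123' 1 ![amalg1243']
    fun A => ⟨0, amalgIso_amalg1243' A, fun α _ => Subsingleton.elim α 0⟩
  simp only [Fin.sum_univ_two, Fin.sum_univ_one] at h₁ h₂
  change _ = m.μ emb123_1243 + m.μ emb123_1342 at h₁
  change _ = m.μ emb123_1243 at h₂
  linear_combination h₂ - h₁

/-- If a permutation X admits an embedding of the permutation 1342, then every measure
assigns 0 to the embedding of the empty permutation into X. -/
theorem measure_of_empty_into_perm_containing_1342 (k : Type) [CommRing k] (m : PMeasure k)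
    (X : Perm2) (h : Nonempty (Emb (listPerm [1,3,4,2]) X)) (e : Emb (listPerm []) X) :
    m.μ e = 0 := by
  obtain ⟨φ⟩ := h
  rw [Subsingleton.elim e (φ.comp (emb123_1342.comp (.ofIsEmpty _ _))), m.comp_mul, m.comp_mul,
    m.μ_emb123_1342_eq_zero, zero_mul, mul_zero]
end

section
/- For every permutation Y, every proper subpermutation X ⊊ Y, and every integer h ≥ 1, there exist a permutation Z and an embedding f : X → Z such that there are at least h distinct embeddings g : Y → Z whose restriction to X equals f. -/
/-!
Blow every point of `Y` up into `h` copies, ordered the same way in both orders (the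
inflation of `Y` by identity permutations). Any choice of a copy for each point of `Y` is an
embedding of `Y`. Choosing copy `0` on `X` and copy `α` at a fixed point outside `X` gives `h`
distinct embeddings of `Y`, all restricting to the same embedding of `X`.
-/

open Function

namespace Perm2

variable (Y : Perm2) (ι : Type) [Fintype ι] [LinearOrder ι]

def inflate : Perm2 where
  A := Y.A × ι
  fin := inferInstance
  ord1 := letI := Y.ord1; inferInstanceAs (LinearOrder (Lex (Y.A × ι)))
  ord2 := letI := Y.ord2; inferInstanceAs (LinearOrder (Lex (Y.A × ι)))

variable {ι}

def graphEmb (c : Y.A → ι) : Emb Y (Y.inflate ι) where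
  f a := (a, c a)
  inj _ _ h := congrArg Prod.fst h
  mono1 _ _ h := Prod.Lex.left _ _ h
  mono2 _ _ h := Prod.Lex.left _ _ h

theorem graphEmb_injective : Injective (Y.graphEmb (ι := ι)) :=
  fun _ _ h => funext fun a => congrArg (fun e : Emb Y (Y.inflate ι) => (e.f a).2) h

end Perm2

theorem Set.piecewise_const_injective {α ι : Type*} {S : Set α} [DecidablePred (· ∈ S)]
    (hS : S ≠ Set.univ) (i₀ : ι) :
    Injective fun i : ι => S.piecewise (fun _ => i₀) (fun _ => i) := by
  obtain ⟨y, hy⟩ := (Set.ne_univ_iff_exists_notMem S).mp hS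
  intro i j hij
  simpa [hy] using congrFun hij y

/-- Given a permutation Y, a proper subpermutation X of Y, and h ≥ 1, there is a
permutation Z and an embedding f : X → Z admitting at least h distinct extensions to Y. -/
theorem extension_property (Y : Perm2) (S : Set Y.A) (hS : S ≠ Set.univ) (h : ℕ) (hh : 1 ≤ h) :
    ∃ (Z : Perm2) (f : Emb (subPerm Y S) Z) (g : Fin h → Emb Y Z),
      Function.Injective g ∧ ∀ (α : Fin h) (a : (subPerm Y S).A), (g α).f a.val = f.f a := by
  classical
  let i₀ : Fin h := ⟨0, hh⟩
  let labels (α : Fin h) : Y.A → Fin h := S.piecewise (fun _ => i₀) (fun _ => α)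
  exact ⟨Y.inflate (Fin h), (Y.graphEmb fun _ => i₀).comp (subEmb Y S),
    fun α => Y.graphEmb (labels α),
    Y.graphEmb_injective.comp (Set.piecewise_const_injective hS i₀),
    fun _ a => congrArg (Prod.mk a.1) (S.piecewise_eq_of_mem _ _ a.2)⟩
end
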